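/- (Symmetric test states) Let ξ be a density matrix on ℂ^d ⊗ ℂ^d that is symmetric, i.e. P₊ ξ P₊ = ξ. Then M_diff := ξᵀ ⊗ P₋ and M_? := ξᵀ ⊗ P₊ are positive semidefinite d⁴×d⁴ matrices with M_diff + M_? = ξᵀ ⊗ I_{d²}, they satisfy the no-error condition tr(ω_{U⊗U} M_diff) = 0 for every U ∈ U(d), and the resulting success probability equals (1/d²) tr(M_diff) = (d−1)/(2d), which is strictly smaller than (d+1)/(2d). -/

import Mathlib

open MeasureTheory Matrix
open scoped Kronecker ComplexOrder

noncomputable instance matNormedAddCommGroup {m n : Type*} [Fintype m] [Fintype n] :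
    NormedAddCommGroup (Matrix m n ℂ) := Matrix.frobeniusNormedAddCommGroup
noncomputable instance matNormedSpace {m n : Type*} [Fintype m] [Fintype n] :
    NormedSpace ℝ (Matrix m n ℂ) := Matrix.frobeniusNormedSpace

noncomputable instance {d : ℕ} :
    MeasurableSpace (Matrix.unitaryGroup (Fin d) ℂ) := borel _
instance {d : ℕ} : BorelSpace (Matrix.unitaryGroup (Fin d) ℂ) := ⟨rfl⟩

/-- The swap operator `S` on `ℂ^d ⊗ ℂ^d`. -/
def swapOp (d : ℕ) : Matrix (Fin d × Fin d) (Fin d × Fin d) ℂ :=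
  Matrix.of fun p q => if p.1 = q.2 ∧ p.2 = q.1 then 1 else 0

/-- The projector onto the symmetric subspace, `P₊ = (I + S)/2`. -/
noncomputable def Pplus (d : ℕ) : Matrix (Fin d × Fin d) (Fin d × Fin d) ℂ :=
  (2⁻¹ : ℂ) • (1 + swapOp d)

/-- The projector onto the antisymmetric subspace, `P₋ = (I - S)/2`. -/
noncomputable def Pminus (d : ℕ) : Matrix (Fin d × Fin d) (Fin d × Fin d) ℂ :=
  (2⁻¹ : ℂ) • (1 - swapOp d)

/-- The unnormalized maximally entangled vector `|Ψ⁺⟩ = Σ_a e_a ⊗ e_a` on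
`ℂ^D ⊗ ℂ^D` for `D = d²`. -/
def psiPlusVec (d : ℕ) : (Fin d × Fin d) × (Fin d × Fin d) → ℂ :=
  fun p => if p.1 = p.2 then 1 else 0

/-- The rank-one operator `Ψ⁺ = |Ψ⁺⟩⟨Ψ⁺|`. -/
noncomputable def psiPlus (d : ℕ) :
    Matrix ((Fin d × Fin d) × (Fin d × Fin d)) ((Fin d × Fin d) × (Fin d × Fin d)) ℂ :=
  Matrix.vecMulVec (psiPlusVec d) (star (psiPlusVec d))

/-- Choi operator `ω_{U⊗V} = (I_D ⊗ (U ⊗ V)) Ψ⁺ (I_D ⊗ (U ⊗ V))†` of the product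
channel `E_U ⊗ E_V`. -/
noncomputable def omegaUV (d : ℕ) (U V : Matrix (Fin d) (Fin d) ℂ) :
    Matrix ((Fin d × Fin d) × (Fin d × Fin d)) ((Fin d × Fin d) × (Fin d × Fin d)) ℂ :=
  ((1 : Matrix (Fin d × Fin d) (Fin d × Fin d) ℂ) ⊗ₖ (U ⊗ₖ V)) * psiPlus d *
    ((1 : Matrix (Fin d × Fin d) (Fin d × Fin d) ℂ) ⊗ₖ (U ⊗ₖ V))ᴴ

/-!
The swap `S` is a self-adjoint involution, so `P₊ = (1 + S)/2` and `P₋ = 1 - P₊` are complementary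
orthogonal projections; this gives positivity of both POVM elements and their sum `ξᵀ ⊗ 1`.
Since `S` commutes with every `U ⊗ U`, conjugating `ξᵀ ⊗ P₋` by the unitary `1 ⊗ (U ⊗ U)` leaves it
unchanged, and pairing with `Ψ⁺` turns `tr(ω_{U⊗U} (ξᵀ ⊗ P₋))` into `tr(ξ P₋)`, which vanishes
because `ξ` lives on the symmetric subspace. The success probability is
`tr ξ · tr P₋ / d² = (d² - d) / (2 d²)`.
-/

theorem isStarProjection_half_smul_one_add {A : Type*} [Ring A] [StarRing A] [Algebra ℂ A]
    [StarModule ℂ A] {s : A} (hs : IsSelfAdjoint s) (hss : s * s = 1) :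
    IsStarProjection ((2⁻¹ : ℂ) • (1 + s)) where
  isIdempotentElem := by
    have hsq : (1 + s) * (1 + s) = (2 : ℂ) • (1 + s) := by
      rw [two_smul, add_mul, mul_add, mul_add, hss, one_mul, mul_one, one_mul]; abel
    rw [IsIdempotentElem, smul_mul_smul_comm, hsq, smul_smul]
    norm_num
  isSelfAdjoint := by
    simp [IsSelfAdjoint, star_smul, hs.star_eq]

section

variable {d : ℕ}

theorem swapOp_mul_apply {n : Type*} [Fintype n] (A : Matrix (Fin d × Fin d) n ℂ)
    (p : Fin d × Fin d) (q : n) : (swapOp d * A) p q = A p.swap q := by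
  rw [mul_apply, Finset.sum_eq_single p.swap]
  · simp [swapOp]
  · rintro r - hr
    simp only [swapOp, of_apply, ite_mul, one_mul, zero_mul, ite_eq_right_iff]
    rintro ⟨h1, h2⟩
    exact absurd (by ext <;> simp [h1, h2]) hr
  · simp

theorem mul_swapOp_apply {n : Type*} [Fintype n] (A : Matrix n (Fin d × Fin d) ℂ)
    (p : n) (q : Fin d × Fin d) : (A * swapOp d) p q = A p q.swap := by
  rw [mul_apply, Finset.sum_eq_single q.swap]
  · simp [swapOp]
  · rintro r - hr
    simp only [swapOp, of_apply, mul_ite, mul_one, mul_zero, ite_eq_right_iff]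
    rintro ⟨h1, h2⟩
    exact absurd (by ext <;> simp [h1, h2]) hr
  · simp

theorem swapOp_mul_swapOp : swapOp d * swapOp d = 1 := by
  ext p q
  rw [swapOp_mul_apply]
  simp [swapOp, one_apply, Prod.ext_iff, and_comm]

theorem isSelfAdjoint_swapOp : IsSelfAdjoint (swapOp d) := by
  ext p q
  simp [swapOp, apply_ite, and_comm, eq_comm]

theorem swapOp_mul_kronecker (U V : Matrix (Fin d) (Fin d) ℂ) :
    swapOp d * (U ⊗ₖ V) = (V ⊗ₖ U) * swapOp d := by
  ext p q
  simp [swapOp_mul_apply, mul_swapOp_apply, mul_comm]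

theorem trace_swapOp : (swapOp d).trace = d := by
  simp only [trace, diag, swapOp, of_apply]
  rw [Fintype.sum_prod_type]
  simp [eq_comm]

theorem Pminus_eq_one_sub_Pplus : Pminus d = 1 - Pplus d := by
  rw [Pminus, Pplus]
  module

theorem isStarProjection_Pplus : IsStarProjection (Pplus d) :=
  isStarProjection_half_smul_one_add isSelfAdjoint_swapOp swapOp_mul_swapOp

theorem isStarProjection_Pminus : IsStarProjection (Pminus d) :=
  Pminus_eq_one_sub_Pplus ▸ isStarProjection_Pplus.one_sub

theorem Pplus_mul_Pminus : Pplus d * Pminus d = 0 :=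
  Pminus_eq_one_sub_Pplus ▸ isStarProjection_Pplus.mul_one_sub_self

theorem Pminus_add_Pplus : Pminus d + Pplus d = 1 := by
  rw [Pminus_eq_one_sub_Pplus, sub_add_cancel]

theorem Pminus_mul_kronecker_self (U : Matrix (Fin d) (Fin d) ℂ) :
    Pminus d * (U ⊗ₖ U) = (U ⊗ₖ U) * Pminus d := by
  simp only [Pminus, smul_mul_assoc, mul_smul_comm, sub_mul, mul_sub, one_mul, mul_one,
    swapOp_mul_kronecker]

theorem trace_Pminus : (Pminus d).trace = ((d : ℂ) ^ 2 - d) / 2 := by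
  simp only [Pminus, trace_smul, trace_sub, trace_one, trace_swapOp, Fintype.card_prod,
    Fintype.card_fin, smul_eq_mul]
  push_cast
  ring

open scoped MatrixOrder in
theorem Matrix.PosSemidef.of_isStarProjection {n : Type*} [Fintype n] {P : Matrix n n ℂ}
    (hP : IsStarProjection P) : P.PosSemidef :=
  hP.nonneg.posSemidef

theorem trace_psiPlus_mul_kronecker (A B : Matrix (Fin d × Fin d) (Fin d × Fin d) ℂ) :
    (psiPlus d * (A ⊗ₖ B)).trace = (Aᵀ * B).trace := by
  rw [psiPlus, vecMulVec_mul, trace_vecMulVec]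
  simp [dotProduct, vecMul, psiPlusVec, Fintype.sum_prod_type, trace, mul_apply,
    kroneckerMap_apply]

theorem trace_omegaUV_mul_kronecker (U V : Matrix (Fin d) (Fin d) ℂ)
    (A B : Matrix (Fin d × Fin d) (Fin d × Fin d) ℂ) :
    (omegaUV d U V * (A ⊗ₖ B)).trace = (Aᵀ * ((U ⊗ₖ V)ᴴ * B * (U ⊗ₖ V))).trace := by
  have hconj : (1 ⊗ₖ (U ⊗ₖ V))ᴴ * (A ⊗ₖ B) * (1 ⊗ₖ (U ⊗ₖ V)) =
      A ⊗ₖ ((U ⊗ₖ V)ᴴ * B * (U ⊗ₖ V)) := by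
    rw [conjTranspose_kronecker, conjTranspose_one, ← mul_kronecker_mul, ← mul_kronecker_mul,
      one_mul, mul_one]
  rw [omegaUV, Matrix.mul_assoc, Matrix.mul_assoc, trace_mul_comm, Matrix.mul_assoc, hconj,
    trace_psiPlus_mul_kronecker]

theorem trace_omegaUV_self_mul_kronecker_Pminus {U : Matrix (Fin d) (Fin d) ℂ}
    (hU : U ∈ unitaryGroup (Fin d) ℂ) (A : Matrix (Fin d × Fin d) (Fin d × Fin d) ℂ) :
    (omegaUV d U U * (A ⊗ₖ Pminus d)).trace = (Aᵀ * Pminus d).trace := by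
  have hUU : (U ⊗ₖ U)ᴴ * (U ⊗ₖ U) = 1 := (kronecker_mem_unitary hU hU).1
  rw [trace_omegaUV_mul_kronecker, Matrix.mul_assoc (U ⊗ₖ U)ᴴ, Pminus_mul_kronecker_self,
    ← Matrix.mul_assoc (U ⊗ₖ U)ᴴ, hUU, one_mul]

theorem mul_Pminus_eq_zero {ξ : Matrix (Fin d × Fin d) (Fin d × Fin d) ℂ}
    (hsym : Pplus d * ξ * Pplus d = ξ) : ξ * Pminus d = 0 := by
  rw [← hsym, Matrix.mul_assoc, Pplus_mul_Pminus, Matrix.mul_zero]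

theorem re_trace_kronecker_Pminus_div_sq (hd : d ≠ 0)
    {ξ : Matrix (Fin d × Fin d) (Fin d × Fin d) ℂ} (hξtr : ξ.trace = 1) :
    (ξᵀ ⊗ₖ Pminus d).trace.re / (d : ℝ) ^ 2 = ((d : ℝ) - 1) / (2 * d) := by
  have htr : (ξᵀ ⊗ₖ Pminus d).trace = (((d : ℝ) ^ 2 - d) / 2 : ℝ) := by
    rw [trace_kronecker, trace_transpose, hξtr, one_mul, trace_Pminus]
    push_cast
    rfl
  rw [htr, Complex.ofReal_re]
  field_simp

end

/-- For a symmetric test state `ξ`, the PPOVM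
`M_diff = ξᵀ ⊗ P₋`, `M_? = ξᵀ ⊗ P₊` is a valid unambiguous comparator whose success
probability equals `(d-1)/(2d)`, strictly smaller than the optimal `(d+1)/(2d)`. -/
theorem symmetric_test_state_suboptimal (d : ℕ) (hd : 2 ≤ d)
    (ξ : Matrix (Fin d × Fin d) (Fin d × Fin d) ℂ)
    (hξ : ξ.PosSemidef) (hξtr : ξ.trace = 1)
    (hsym : Pplus d * ξ * Pplus d = ξ) :
    (ξᵀ ⊗ₖ Pminus d).PosSemidef ∧ (ξᵀ ⊗ₖ Pplus d).PosSemidef ∧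
    ξᵀ ⊗ₖ Pminus d + ξᵀ ⊗ₖ Pplus d =
      ξᵀ ⊗ₖ (1 : Matrix (Fin d × Fin d) (Fin d × Fin d) ℂ) ∧
    (∀ U : Matrix (Fin d) (Fin d) ℂ, U ∈ Matrix.unitaryGroup (Fin d) ℂ →
      (omegaUV d U U * (ξᵀ ⊗ₖ Pminus d)).trace = 0) ∧
    (ξᵀ ⊗ₖ Pminus d).trace.re / (d : ℝ) ^ 2 = ((d : ℝ) - 1) / (2 * d) ∧
    ((d : ℝ) - 1) / (2 * d) < ((d : ℝ) + 1) / (2 * d) := by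
  have hd0 : (0 : ℝ) < d := by exact_mod_cast (by omega : 0 < d)
  refine ⟨hξ.transpose.kronecker (.of_isStarProjection isStarProjection_Pminus),
    hξ.transpose.kronecker (.of_isStarProjection isStarProjection_Pplus),
    by rw [← kronecker_add, Pminus_add_Pplus], fun U hU => ?_,
    re_trace_kronecker_Pminus_div_sq (by omega) hξtr,
    div_lt_div_of_pos_right (by linarith) (by positivity)⟩
  rw [trace_omegaUV_self_mul_kronecker_Pminus hU, transpose_transpose, mul_Pminus_eq_zero hsym,
    trace_zero]
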